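/- Fix ε ∈ (0,1) and c > 0, and let t0 < t1 with τ := t1 − t0 satisfying: τ < ε·R_min²/c, τ < R_min/(2‖R'‖), and τ < 2√(1+√(1−ε²))·R_min/√‖(R²)''‖. Then the angular variation of the Dirichlet solution between the two bounces equals ∫_{t0}^{t1} c/r(t)² dt = π − arctan( cτ / √(R(t0)²R(t1)² − c²τ²) ). -/

import Mathlib

noncomputable section

/-- Sup-norm of a function (for a continuous 1-periodic function this is the maximum of `|f|`). -/
def supNorm (f : ℝ → ℝ) : ℝ := sSup (Set.range fun t => |f t|)

/-- Minimum value of `R` (attained for a continuous 1-periodic `R`). -/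
def Rmin (R : ℝ → ℝ) : ℝ := sInf (Set.range R)

/-- Maximum value of `R` (attained for a continuous 1-periodic `R`). -/
def Rmax (R : ℝ → ℝ) : ℝ := sSup (Set.range R)

/-- The constant `σ = min { R_min/(2‖R'‖) , 2√(1+√(1−ε²))·R_min/√‖(R²)''‖ }`. -/
def sigmaR (R : ℝ → ℝ) (ε : ℝ) : ℝ :=
  min (Rmin R / (2 * supNorm (deriv R)))
    (2 * Real.sqrt (1 + Real.sqrt (1 - ε ^ 2)) * Rmin R /
      Real.sqrt (supNorm (deriv (deriv (fun t => R t ^ 2)))))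

/-- `√(R(t0)²R(t1)² − c²(t1−t0)²)`. -/
def Ssq (R : ℝ → ℝ) (c t0 t1 : ℝ) : ℝ :=
  Real.sqrt (R t0 ^ 2 * R t1 ^ 2 - c ^ 2 * (t1 - t0) ^ 2)

/-- `A(t0,t1) = (R(t0)² + R(t1)² + 2√(R(t0)²R(t1)² − c²(t1−t0)²))/(t1−t0)²`. -/
def Afun (R : ℝ → ℝ) (c t0 t1 : ℝ) : ℝ :=
  (R t0 ^ 2 + R t1 ^ 2 + 2 * Ssq R c t0 t1) / (t1 - t0) ^ 2

/-- `B = −( t0 + (R(t0)² + √(R(t0)²R(t1)² − c²(t1−t0)²))/((t1−t0)·A) )`. -/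
def Bfun (R : ℝ → ℝ) (c t0 t1 : ℝ) : ℝ :=
  -(t0 + (R t0 ^ 2 + Ssq R c t0 t1) / ((t1 - t0) * Afun R c t0 t1))

/-- The Dirichlet solution `r(t) = √((A²(t+B)² + c²)/A)`. -/
def dirich (R : ℝ → ℝ) (c t0 t1 t : ℝ) : ℝ :=
  Real.sqrt ((Afun R c t0 t1 ^ 2 * (t + Bfun R c t0 t1) ^ 2 + c ^ 2) / Afun R c t0 t1)

/-- The generating function
`h(t0,t1) = ½(t1−t0)·A(t0,t1) + c·arctan( c(t1−t0)/√(R(t0)²R(t1)² − c²(t1−t0)²) )`. -/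
def hgen (R : ℝ → ℝ) (c t0 t1 : ℝ) : ℝ :=
  (1 / 2) * (t1 - t0) * Afun R c t0 t1 +
    c * Real.arctan (c * (t1 - t0) / Ssq R c t0 t1)

/-- `∂₁h`, the partial derivative of `h` in its first argument. -/
def d1h (R : ℝ → ℝ) (c t0 t1 : ℝ) : ℝ := deriv (fun s => hgen R c s t1) t0

/-- `∂₂h`, the partial derivative of `h` in its second argument. -/
def d2h (R : ℝ → ℝ) (c t0 t1 : ℝ) : ℝ := deriv (fun s => hgen R c t0 s) t1

/-- `∂₁₂h`, the mixed second partial derivative of `h`. -/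
def d12h (R : ℝ → ℝ) (c t0 t1 : ℝ) : ℝ := deriv (fun s => d1h R c t0 s) t1

/-!
Since `r(t)² = (A²(t+B)² + c²)/A`, the integrand `c/r²` is the derivative of
`arctan (A(t+B)/c)`. At the bounces `A(t₀+B) = -(R(t₀)² + S)/τ` and `A(t₁+B) = (R(t₁)² + S)/τ`,
where `S = √(R(t₀)²R(t₁)² − c²τ²)`; the product of the two arctan arguments exceeds `1`, so
the addition formula for `arctan` picks up a `π` and leaves `π − arctan (cτ/S)`. The time-gap
condition `cτ < ε R_min² ≤ R(t₀)R(t₁)` is what makes `S` positive.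
-/

open Real

lemma Rmin_nonneg {R : ℝ → ℝ} (hpos : ∀ t, 0 < R t) : 0 ≤ Rmin R :=
  Real.sInf_nonneg (by rintro _ ⟨t, rfl⟩; exact (hpos t).le)

lemma Rmin_le {R : ℝ → ℝ} (hpos : ∀ t, 0 < R t) (t : ℝ) : Rmin R ≤ R t :=
  csInf_le ⟨0, by rintro _ ⟨s, rfl⟩; exact (hpos s).le⟩ ⟨t, rfl⟩

lemma Rmin_sq_le_mul {R : ℝ → ℝ} (hpos : ∀ t, 0 < R t) (t0 t1 : ℝ) :
    Rmin R ^ 2 ≤ R t0 * R t1 := by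
  rw [sq]
  exact mul_le_mul (Rmin_le hpos t0) (Rmin_le hpos t1) (Rmin_nonneg hpos) (hpos t0).le

section Dirichlet

variable {R : ℝ → ℝ} {c t0 t1 : ℝ}

lemma sq_Ssq (h : 0 ≤ R t0 ^ 2 * R t1 ^ 2 - c ^ 2 * (t1 - t0) ^ 2) :
    Ssq R c t0 t1 ^ 2 = R t0 ^ 2 * R t1 ^ 2 - c ^ 2 * (t1 - t0) ^ 2 :=
  Real.sq_sqrt h

lemma Ssq_pos (hcτ : 0 ≤ c * (t1 - t0)) (h : c * (t1 - t0) < R t0 * R t1) :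
    0 < Ssq R c t0 t1 :=
  Real.sqrt_pos.2 (by nlinarith)

lemma Afun_pos (h0 : R t0 ≠ 0) (ht : t0 ≠ t1) : 0 < Afun R c t0 t1 := by
  have hS : 0 ≤ Ssq R c t0 t1 := Real.sqrt_nonneg _
  have hτ : t1 - t0 ≠ 0 := sub_ne_zero.2 ht.symm
  exact div_pos (by positivity) (by positivity)

lemma Afun_mul_left_add_Bfun (hA : Afun R c t0 t1 ≠ 0) (ht : t0 ≠ t1) :
    Afun R c t0 t1 * (t0 + Bfun R c t0 t1) = -((R t0 ^ 2 + Ssq R c t0 t1) / (t1 - t0)) := by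
  have hτ : t1 - t0 ≠ 0 := sub_ne_zero.2 ht.symm
  rw [Bfun]
  field_simp
  ring

lemma Afun_mul_right_add_Bfun (hA : Afun R c t0 t1 ≠ 0) (ht : t0 ≠ t1) :
    Afun R c t0 t1 * (t1 + Bfun R c t0 t1) = (R t1 ^ 2 + Ssq R c t0 t1) / (t1 - t0) := by
  have hτ : t1 - t0 ≠ 0 := sub_ne_zero.2 ht.symm
  have hAτ : Afun R c t0 t1 * (t1 - t0) =
      (R t0 ^ 2 + R t1 ^ 2 + 2 * Ssq R c t0 t1) / (t1 - t0) := by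
    rw [Afun]
    field_simp
  have hsplit : Afun R c t0 t1 * (t1 + Bfun R c t0 t1) =
      Afun R c t0 t1 * (t1 - t0) - (R t0 ^ 2 + Ssq R c t0 t1) / (t1 - t0) := by
    rw [Bfun]
    field_simp
    ring
  rw [hsplit, hAτ]
  ring

lemma sq_dirich (hA : 0 ≤ Afun R c t0 t1) (t : ℝ) :
    dirich R c t0 t1 t ^ 2 =
      (Afun R c t0 t1 ^ 2 * (t + Bfun R c t0 t1) ^ 2 + c ^ 2) / Afun R c t0 t1 :=
  Real.sq_sqrt (by positivity)

end Dirichlet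

lemma hasDerivAt_arctan_affine_div {A B c : ℝ} (hc : c ≠ 0) (t : ℝ) :
    HasDerivAt (fun t => arctan (A * (t + B) / c)) (c / ((A ^ 2 * (t + B) ^ 2 + c ^ 2) / A)) t := by
  have hlin : HasDerivAt (fun t => A * (t + B) / c) (A / c) t := by
    simpa using (((hasDerivAt_id t).add_const B).const_mul A).div_const c
  refine ((hasDerivAt_arctan _).comp t hlin).congr_deriv ?_
  have hX : 0 < A ^ 2 * (t + B) ^ 2 + c ^ 2 := by positivity
  field_simp
  ring

lemma integral_div_affine_sq_add_sq {A B c : ℝ} (hc : c ≠ 0) (a b : ℝ) :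
    ∫ t in a..b, c / ((A ^ 2 * (t + B) ^ 2 + c ^ 2) / A) =
      arctan (A * (b + B) / c) - arctan (A * (a + B) / c) := by
  have hcont : Continuous fun t => c / ((A ^ 2 * (t + B) ^ 2 + c ^ 2) / A) := by
    simp_rw [div_div_eq_mul_div]
    exact continuous_const.div (by fun_prop) fun t => by positivity
  exact intervalIntegral.integral_eq_sub_of_hasDerivAt
    (fun t _ => hasDerivAt_arctan_affine_div hc t) (hcont.intervalIntegrable a b)

/-- With `x = (b²+S)/k` and `y = (a²+S)/k` one has `xy > 1`, and `(x+y)/(1-xy) = -k/S`. -/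
lemma arctan_add_arctan_eq_pi_sub {a b S k : ℝ} (hk : 0 < k) (hS : 0 < S)
    (hSsq : S ^ 2 = a ^ 2 * b ^ 2 - k ^ 2) :
    arctan ((b ^ 2 + S) / k) + arctan ((a ^ 2 + S) / k) = π - arctan (k / S) := by
  have hxy : 1 < (b ^ 2 + S) / k * ((a ^ 2 + S) / k) := by
    rw [div_mul_div_comm, one_lt_div (by positivity)]
    nlinarith [mul_nonneg hS.le (sq_nonneg a), mul_nonneg hS.le (sq_nonneg b), mul_pos hS hS]
  have hquot : ((b ^ 2 + S) / k + (a ^ 2 + S) / k) /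
      (1 - (b ^ 2 + S) / k * ((a ^ 2 + S) / k)) = -(k / S) := by
    rw [div_eq_iff (by linarith)]
    field_simp
    linear_combination hSsq
  rw [arctan_add_eq_add_pi hxy (by positivity), hquot, arctan_neg]
  ring

theorem angular_variation_formula_general (R : ℝ → ℝ) (ε c t0 t1 : ℝ)
    (hpos : ∀ t, 0 < R t)
    (hε : ε ∈ Set.Ioo (0 : ℝ) 1) (hc : 0 < c) (ht : t0 < t1)
    (hτ1 : t1 - t0 < ε * Rmin R ^ 2 / c) :
    ∫ t in t0..t1, c / dirich R c t0 t1 t ^ 2 =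
      Real.pi - Real.arctan (c * (t1 - t0) / Ssq R c t0 t1) := by
  have hτ : 0 < t1 - t0 := sub_pos.2 ht
  have hcτ : c * (t1 - t0) < R t0 * R t1 :=
    calc c * (t1 - t0) < ε * Rmin R ^ 2 := by rwa [lt_div_iff₀ hc, mul_comm] at hτ1
      _ ≤ Rmin R ^ 2 := mul_le_of_le_one_left (sq_nonneg _) hε.2.le
      _ ≤ R t0 * R t1 := Rmin_sq_le_mul hpos t0 t1
  have hS := Ssq_pos (mul_pos hc hτ).le hcτ
  have hA := Afun_pos (c := c) (hpos t0).ne' ht.ne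
  have hSsq := sq_Ssq (Real.sqrt_pos.1 hS).le
  rw [intervalIntegral.integral_congr fun t _ => by rw [sq_dirich hA.le t],
    integral_div_affine_sq_add_sq hc.ne', Afun_mul_left_add_Bfun hA.ne' ht.ne,
    Afun_mul_right_add_Bfun hA.ne' ht.ne, neg_div, arctan_neg, sub_neg_eq_add, div_div, div_div,
    mul_comm (t1 - t0) c]
  exact arctan_add_arctan_eq_pi_sub (mul_pos hc hτ) hS (by linear_combination hSsq)

/-- Under the time-gap conditions of Proposition 3.1 the angular variation
of the Dirichlet solution between the two bounces equals
`∫_{t0}^{t1} c/r(t)² dt = π − arctan( c(t1−t0)/√(R(t0)²R(t1)² − c²(t1−t0)²) )`. -/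
theorem angular_variation_formula (R : ℝ → ℝ) (ε c t0 t1 : ℝ)
    (hC : ContDiff ℝ 2 R) (hper : ∀ t, R (t + 1) = R t) (hpos : ∀ t, 0 < R t)
    (hnc : ∃ a b, R a ≠ R b)
    (hε : ε ∈ Set.Ioo (0 : ℝ) 1) (hc : 0 < c) (ht : t0 < t1)
    (hτ1 : t1 - t0 < ε * Rmin R ^ 2 / c)
    (hτ2 : t1 - t0 < Rmin R / (2 * supNorm (deriv R)))
    (hτ3 : t1 - t0 < 2 * Real.sqrt (1 + Real.sqrt (1 - ε ^ 2)) * Rmin R /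
      Real.sqrt (supNorm (deriv (deriv (fun t => R t ^ 2))))) :
    ∫ t in t0..t1, c / dirich R c t0 t1 t ^ 2 =
      Real.pi - Real.arctan (c * (t1 - t0) / Ssq R c t0 t1) :=
  angular_variation_formula_general R ε c t0 t1 hpos hε hc ht hτ1
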